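/- Under the linear herding model, for every m ∈ 𝓜 and i ≥ 1, the conditional expectation of the next historical collective opinion satisfies E[β_{i+1,m} | 𝓗_i] = β_{i,m} + w̃_{i+1}·(1 − γ_i + η_i γ_i)·(α_m − β_{i,m}) almost surely. -/

import Mathlib

open MeasureTheory Filter

/-- Cumulative weight `∑_{j=1}^i w_j`. -/
noncomputable def Sw (w : ℕ → ℝ) (i : ℕ) : ℝ := ∑ j ∈ Finset.Icc 1 i, w j

/-- Normalized weight `w̃_i = w_i / ∑_{j=1}^i w_j`. -/
noncomputable def wnorm (w : ℕ → ℝ) (i : ℕ) : ℝ := w i / Sw w i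

/-- Historical collective opinion
`β_{i,m} = (∑_{j=1}^i w_j 1{R_j = m}) / (∑_{j=1}^i w_j)`. -/
noncomputable def betaH {Ω : Type*} (w : ℕ → ℝ) (R : ℕ → Ω → ℕ) (i m : ℕ) (ω : Ω) : ℝ :=
  (∑ j ∈ Finset.Icc 1 i, w j * (if R j ω = m then (1 : ℝ) else 0)) / Sw w i

/-- `𝓗_i`: the σ-algebra generated by `R_1, …, R_i` (trivial for `i = 0`). -/
def Hsig {Ω : Type*} (R : ℕ → Ω → ℕ) (i : ℕ) : MeasurableSpace Ω :=
  ⨆ j ∈ Finset.Icc 1 i, MeasurableSpace.comap (R j) ⊤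

/-!
The new rating enters the weighted average `β_{i+1,m}` with relative weight `w̃_{i+1}`, so
`β_{i+1,m} = (1 - w̃_{i+1}) β_{i,m} + w̃_{i+1} 1{R_{i+1} = m}`. The first summand is
`𝓗_i`-measurable and the conditional expectation of the second is given by the herding model;
the claim is this identity rearranged.
-/

section Weights

variable (w : ℕ → ℝ)

theorem Sw_succ (i : ℕ) : Sw w (i + 1) = Sw w i + w (i + 1) :=
  Finset.sum_Icc_succ_top (Nat.le_add_left 1 i) w

theorem Sw_pos (hw : ∀ j, 0 ≤ w j) (hw1 : 0 < w 1) {i : ℕ} (hi : 1 ≤ i) : 0 < Sw w i :=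
  hw1.trans_le <| Finset.single_le_sum (fun j _ => hw j) (Finset.mem_Icc.2 ⟨le_rfl, hi⟩)

end Weights

section History

variable {Ω : Type*} (R : ℕ → Ω → ℕ)

theorem betaH_succ (w : ℕ → ℝ) {i : ℕ} (hS : Sw w i ≠ 0) (hS' : Sw w (i + 1) ≠ 0)
    (m : ℕ) (ω : Ω) :
    betaH w R (i + 1) m ω = (1 - wnorm w (i + 1)) * betaH w R i m ω
      + wnorm w (i + 1) * (if R (i + 1) ω = m then 1 else 0) := by
  rw [Sw_succ] at hS'
  unfold betaH wnorm
  rw [Finset.sum_Icc_succ_top (Nat.le_add_left 1 i), Sw_succ]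
  field_simp
  ring

theorem measurable_Hsig {i j : ℕ} (hj : j ∈ Finset.Icc 1 i) : Measurable[Hsig R i] (R j) :=
  measurable_iff_comap_le.mpr <| le_biSup (fun j => MeasurableSpace.comap (R j) ⊤) hj

theorem Hsig_le [m₀ : MeasurableSpace Ω] (hR : ∀ i, Measurable (R i)) (i : ℕ) :
    Hsig R i ≤ m₀ :=
  iSup₂_le fun j _ => (hR j).comap_le

theorem measurable_indicator_eq {m₀ : MeasurableSpace Ω} {j : ℕ} (hj : Measurable[m₀] (R j))
    (m : ℕ) : Measurable[m₀] fun ω => if R j ω = m then (1 : ℝ) else 0 :=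
  Measurable.ite (hj (measurableSet_singleton m)) measurable_const measurable_const

theorem measurable_betaH_Hsig (w : ℕ → ℝ) (i m : ℕ) : Measurable[Hsig R i] (betaH w R i m) :=
  (Finset.measurable_sum _ fun j hj =>
    ((measurable_indicator_eq R (measurable_Hsig R hj) m).const_mul (w j))).div_const _

variable [MeasurableSpace Ω] (μ : Measure Ω) [IsFiniteMeasure μ] {R}

theorem integrable_indicator_eq (hR : ∀ i, Measurable (R i)) (j m : ℕ) :
    Integrable (fun ω => if R j ω = m then (1 : ℝ) else 0) μ :=
  (integrable_const 1).mono' (measurable_indicator_eq R (hR j) m).aestronglyMeasurable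
    (ae_of_all _ fun ω => by split_ifs <;> simp)

theorem integrable_betaH (hR : ∀ i, Measurable (R i)) (w : ℕ → ℝ) (i m : ℕ) :
    Integrable (betaH w R i m) μ :=
  (integrable_finsetSum _ fun j _ =>
    (integrable_indicator_eq μ hR j m).const_mul (w j)).div_const _

theorem condExp_betaH_succ (hR : ∀ i, Measurable (R i)) (w : ℕ → ℝ) {i : ℕ}
    (hS : Sw w i ≠ 0) (hS' : Sw w (i + 1) ≠ 0) (m : ℕ) :
    μ[betaH w R (i + 1) m | Hsig R i] =ᵐ[μ] fun ω => (1 - wnorm w (i + 1)) * betaH w R i m ω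
      + wnorm w (i + 1) * μ[fun ω => if R (i + 1) ω = m then (1 : ℝ) else 0 | Hsig R i] ω := by
  have hsplit : betaH w R (i + 1) m = (fun ω => (1 - wnorm w (i + 1)) * betaH w R i m ω)
      + wnorm w (i + 1) • fun ω => if R (i + 1) ω = m then (1 : ℝ) else 0 :=
    funext (betaH_succ R w hS hS' m)
  have hpast : μ[fun ω => (1 - wnorm w (i + 1)) * betaH w R i m ω | Hsig R i]
      = fun ω => (1 - wnorm w (i + 1)) * betaH w R i m ω :=
    condExp_of_stronglyMeasurable (Hsig_le R hR i)
      ((measurable_betaH_Hsig R w i m).const_mul _).stronglyMeasurable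
      ((integrable_betaH μ hR w i m).const_mul _)
  rw [hsplit]
  filter_upwards [condExp_add ((integrable_betaH μ hR w i m).const_mul _)
      ((integrable_indicator_eq μ hR (i + 1) m).smul (wnorm w (i + 1))) (Hsig R i),
    condExp_smul (μ := μ) (wnorm w (i + 1))
      (fun ω => if R (i + 1) ω = m then (1 : ℝ) else 0) (Hsig R i)] with ω hadd hsmul
  rw [hadd, Pi.add_apply, hpast, hsmul, Pi.smul_apply, smul_eq_mul]

end History

theorem stmt_13_general
    {Ω : Type*} [MeasurableSpace Ω] (μ : Measure Ω) [IsProbabilityMeasure μ]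
    (M : ℕ)
    (α : ℕ → ℝ)
    (R : ℕ → Ω → ℕ)
    (hRmeas : ∀ i, Measurable (R i))
    (w : ℕ → ℝ) (hw : ∀ j, 0 ≤ w j) (hw1 : 0 < w 1)
    (γ : ℕ → ℝ)
    (η : ℕ → ℝ)
    -- linear herding model:
    -- `P[R_{i+1} = m | 𝓗_i] = γ_i ((1 − η_i) β_{i,m} + η_i α_m) + (1 − γ_i) α_m` a.s.
    (hmodel : ∀ i : ℕ, 1 ≤ i → ∀ m ∈ Finset.Icc 1 M,
      μ[(fun ω => if R (i + 1) ω = m then (1 : ℝ) else 0) | Hsig R i]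
        =ᵐ[μ] fun ω =>
          γ i * ((1 - η i) * betaH w R i m ω + η i * α m) + (1 - γ i) * α m) :
    ∀ m ∈ Finset.Icc 1 M, ∀ i : ℕ, 1 ≤ i →
      μ[(fun ω => betaH w R (i + 1) m ω) | Hsig R i]
        =ᵐ[μ] fun ω =>
          betaH w R i m ω
            + wnorm w (i + 1) * (1 - γ i + η i * γ i) * (α m - betaH w R i m ω) := by
  intro m hm i hi
  have hS := (Sw_pos w hw hw1 hi).ne'
  have hS' := (Sw_pos w hw hw1 (Nat.le_add_left 1 i)).ne'
  filter_upwards [condExp_betaH_succ μ hRmeas w hS hS' m, hmodel i hi m hm] with ω hβ hR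
  rw [hβ, hR]
  ring

/-- under the linear herding model, for every `m ∈ 𝓜` and `i ≥ 1`,
`E[β_{i+1,m} | 𝓗_i] = β_{i,m} + w̃_{i+1} (1 − γ_i + η_i γ_i)(α_m − β_{i,m})` a.s. -/
theorem stmt_13
    {Ω : Type*} [MeasurableSpace Ω] (μ : Measure Ω) [IsProbabilityMeasure μ]
    (M : ℕ) (hM : 1 ≤ M)
    (α : ℕ → ℝ) (hα : ∀ m ∈ Finset.Icc 1 M, α m ∈ Set.Icc (0 : ℝ) 1)
    (hα1 : ∑ m ∈ Finset.Icc 1 M, α m = 1)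
    (R : ℕ → Ω → ℕ) (hRrange : ∀ i, 1 ≤ i → ∀ ω, R i ω ∈ Finset.Icc 1 M)
    (hRmeas : ∀ i, Measurable (R i))
    (w : ℕ → ℝ) (hw : ∀ j, 0 ≤ w j) (hw1 : 0 < w 1)
    (γ : ℕ → ℝ) (hγ : ∀ i, γ i ∈ Set.Icc (0 : ℝ) 1)
    (η : ℕ → ℝ) (hη : ∀ i, η i ∈ Set.Icc (0 : ℝ) 1)
    -- linear herding model:
    -- `P[R_{i+1} = m | 𝓗_i] = γ_i ((1 − η_i) β_{i,m} + η_i α_m) + (1 − γ_i) α_m` a.s.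
    (hmodel : ∀ i : ℕ, 1 ≤ i → ∀ m ∈ Finset.Icc 1 M,
      μ[(fun ω => if R (i + 1) ω = m then (1 : ℝ) else 0) | Hsig R i]
        =ᵐ[μ] fun ω =>
          γ i * ((1 - η i) * betaH w R i m ω + η i * α m) + (1 - γ i) * α m) :
    ∀ m ∈ Finset.Icc 1 M, ∀ i : ℕ, 1 ≤ i →
      μ[(fun ω => betaH w R (i + 1) m ω) | Hsig R i]
        =ᵐ[μ] fun ω =>
          betaH w R i m ω
            + wnorm w (i + 1) * (1 - γ i + η i * γ i) * (α m - betaH w R i m ω) :=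
  stmt_13_general μ M α R hRmeas w hw hw1 γ η hmodel
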